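/- arXiv:2206.00526 — 5 statements merged into one kernel-verified Lean document; each statement's English description precedes it below -/
import Mathlib

section
/- Let N be a network with source s and sink t, let x be a maximum s-t flow, and let B be a cycle in the residual network N_x. Let x' = x + u_x(B)·χ^B be the flow obtained by augmenting x along B. Then the set of nodes reachable from s in the residual network is unchanged: V_x(s) = V_{x'}(s); similarly V_x(t) = V_{x'}(t) and hence the set of 'between-cut' nodes V \ (V_x(s) ∪ V_x(t)) is also unchanged. -/
/-- A chain of arcs from `p` to `q`: each arc's tail matches the current vertex. -/
def ArcChain {W E : Type*} (tl hd : E → W) : W → W → List E → Prop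
  | p, q, [] => p = q
  | p, q, e :: l => tl e = p ∧ ArcChain tl hd (hd e) q l

/-- A network: a directed multigraph with a source, a sink and integral arc capacities. -/
structure Network (V A : Type*) where
  tail : A → V
  head : A → V
  s : V
  t : V
  u : A → ℤ

/-- Transit times extended to residual (backward) arcs by negation. -/
def resTT {A : Type*} (τ : A → ℕ) : A ⊕ A → ℤ :=
  Sum.elim (fun a => (τ a : ℤ)) (fun a => -(τ a : ℤ))

/-- Costs extended to residual (backward) arcs by negation. -/
def resC {A : Type*} (c : A → ℤ) : A ⊕ A → ℤ := Sum.elim c (fun a => -c a)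

/-- The partial (prefix) sums of `g` along a list, starting with `0`. -/
def psums {E : Type*} (g : E → ℤ) : List E → List ℤ
  | [] => [0]
  | e :: l => 0 :: (psums g l).map (fun z => g e + z)

/-- Minimum partial sum (the `0` seed is itself always a partial sum). -/
def hlo {E : Type*} (g : E → ℤ) (l : List E) : ℤ := (psums g l).foldr min 0

/-- Maximum partial sum. -/
def hhi {E : Type*} (g : E → ℤ) (l : List E) : ℤ := (psums g l).foldr max 0

/-- The height of a walk: maximum minus minimum partial sum of transit times. -/
def spreadOf {E : Type*} (g : E → ℤ) (l : List E) : ℤ := hhi g l - hlo g l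

namespace Network
variable {V A : Type*} (N : Network V A)

/-- Tail of a residual arc: `Sum.inl a` is the forward copy of `a`, `Sum.inr a` backward. -/
def resTail : A ⊕ A → V := Sum.elim N.tail N.head

def resHead : A ⊕ A → V := Sum.elim N.head N.tail

/-- Residual capacity of a residual arc with respect to a flow `x`. -/
def resCap (x : A → ℤ) : A ⊕ A → ℤ := Sum.elim (fun a => N.u a - x a) x

/-- A walk in the residual network `N_x`. -/
def IsResWalk (x : A → ℤ) (p q : V) (l : List (A ⊕ A)) : Prop :=
  ArcChain N.resTail N.resHead p q l ∧ ∀ e ∈ l, 0 < N.resCap x e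

/-- A cycle in the residual network `N_x`. -/
def IsResCycle (x : A → ℤ) (p : V) (l : List (A ⊕ A)) : Prop :=
  N.IsResWalk x p p l ∧ l ≠ [] ∧ (l.map N.resHead).Nodup

/-- A feasible static `s`-`t` flow: capacities and conservation at intermediate nodes. -/
def Feasible [Fintype A] [DecidableEq V] (x : A → ℤ) : Prop :=
  (∀ a, 0 ≤ x a ∧ x a ≤ N.u a) ∧
  ∀ v, v ≠ N.s → v ≠ N.t →
    (∑ a : A, if N.head a = v then x a else 0) = (∑ a : A, if N.tail a = v then x a else 0)

/-- The value of a flow: net outflow of the source. -/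
def value [Fintype A] [DecidableEq V] (x : A → ℤ) : ℤ :=
  (∑ a : A, if N.tail a = N.s then x a else 0) - (∑ a : A, if N.head a = N.s then x a else 0)

/-- A maximum `s`-`t` flow: feasible and of maximal value. -/
def IsMaxFlow [Fintype A] [DecidableEq V] (x : A → ℤ) : Prop :=
  N.Feasible x ∧ ∀ y : A → ℤ, N.Feasible y → N.value y ≤ N.value x

/-- Reachability in the residual network `N_x`. -/
def ResReach (x : A → ℤ) : V → V → Prop :=
  Relation.ReflTransGen
    (fun p q => ∃ e : A ⊕ A, 0 < N.resCap x e ∧ N.resTail e = p ∧ N.resHead e = q)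

end Network


/-!
Augmenting along `B` changes the residual capacity of a residual arc `e` by
`-(#e - #e.swap) * m`, where `#` counts occurrences in `B`. So an arc can only enter the
residual network if its reverse lies on `B`, and then the rest of `B` still joins its
endpoints in `N_x`; an arc can only leave it if it lies on `B` itself, and then the reversed
cycle, which is residual for `x'` because `B` uses each arc once and `x` is feasible,
joins its endpoints in `N_x'`. Hence `N_x` and `N_x'` have the same reachability relation.
-/

-- `List.count` on `A ⊕ A` goes through `Sum.instBEq`, for which core has no `LawfulBEq`.
instance {α β : Type*} [BEq α] [ReflBEq α] [BEq β] [ReflBEq β] : ReflBEq (α ⊕ β) where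
  rfl {e} := by
    cases e with
    | inl a => exact BEq.rfl (a := a)
    | inr b => exact BEq.rfl (a := b)

instance {α β : Type*} [BEq α] [LawfulBEq α] [BEq β] [LawfulBEq β] : LawfulBEq (α ⊕ β) where
  eq_of_beq {e f} h := by
    cases e <;> cases f <;> first | exact congrArg _ (eq_of_beq h) | cases h

namespace ArcChain

variable {W E : Type*} {tl hd : E → W}

theorem append {p q r : W} {l₁ l₂ : List E} (h₁ : ArcChain tl hd p q l₁)
    (h₂ : ArcChain tl hd q r l₂) : ArcChain tl hd p r (l₁ ++ l₂) := by
  induction l₁ generalizing p with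
  | nil => exact (h₁ : p = q) ▸ h₂
  | cons e l ih => exact ⟨h₁.1, ih h₁.2⟩

theorem exists_of_append {p q : W} {l₁ l₂ : List E} (h : ArcChain tl hd p q (l₁ ++ l₂)) :
    ∃ r, ArcChain tl hd p r l₁ ∧ ArcChain tl hd r q l₂ := by
  induction l₁ generalizing p with
  | nil => exact ⟨p, rfl, h⟩
  | cons e l ih =>
    obtain ⟨r, h₁, h₂⟩ := ih h.2
    exact ⟨r, ⟨h.1, h₁⟩, h₂⟩

theorem reverse_map {E' : Type*} {tl' hd' : E' → W} (f : E → E')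
    (htl : ∀ e, tl' (f e) = hd e) (hhd : ∀ e, hd' (f e) = tl e)
    {p q : W} {l : List E} (h : ArcChain tl hd p q l) :
    ArcChain tl' hd' q p (l.map f).reverse := by
  induction l generalizing p with
  | nil => exact (h : p = q).symm
  | cons e l ih =>
    have hlast : ArcChain tl' hd' (hd e) p [f e] := ⟨htl e, (hhd e).trans h.1⟩
    simpa using (ih h.2).append hlast

theorem reflTransGen {P : E → Prop} {p q : W} {l : List E} (h : ArcChain tl hd p q l)
    (hP : ∀ e ∈ l, P e) :
    Relation.ReflTransGen (fun v w => ∃ e, P e ∧ tl e = v ∧ hd e = w) p q := by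
  induction l generalizing p with
  | nil => exact (h : p = q) ▸ .refl
  | cons e l ih =>
    exact .head ⟨e, hP e (by simp), h.1, rfl⟩ (ih h.2 fun f hf => hP f (by simp [hf]))

theorem reflTransGen_of_mem_of_closed {P : E → Prop} {p : W} {l : List E}
    (h : ArcChain tl hd p p l) (hP : ∀ e ∈ l, P e) {e : E} (he : e ∈ l) :
    Relation.ReflTransGen (fun v w => ∃ e, P e ∧ tl e = v ∧ hd e = w) (hd e) (tl e) := by
  obtain ⟨l₁, l₂, rfl⟩ := List.append_of_mem he
  obtain ⟨r, h₁, ⟨hr, h₂⟩⟩ := exists_of_append h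
  have hP₁ : ∀ f ∈ l₁, P f := fun f hf => hP f (by simp [hf])
  have hP₂ : ∀ f ∈ l₂, P f := fun f hf => hP f (by simp [hf])
  exact (h₂.reflTransGen hP₂).trans (hr ▸ h₁.reflTransGen hP₁)

end ArcChain

/-- The flow `x + m · χ^B`, where `χ^B a` is the number of forward minus backward copies
of `a` on `B`. -/
def cycleAugment {A : Type*} [DecidableEq A] (x : A → ℤ) (B : List (A ⊕ A)) (m : ℤ) :
    A → ℤ :=
  fun a => x a + ((B.count (Sum.inl a) : ℤ) - (B.count (Sum.inr a) : ℤ)) * m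

namespace Network

variable {V A : Type*} (N : Network V A)

@[simp]
theorem resTail_swap (e : A ⊕ A) : N.resTail e.swap = N.resHead e := by
  cases e <;> rfl

@[simp]
theorem resHead_swap (e : A ⊕ A) : N.resHead e.swap = N.resTail e := by
  cases e <;> rfl

theorem Feasible.resCap_nonneg [Fintype A] [DecidableEq V] {x : A → ℤ} (hx : N.Feasible x)
    (e : A ⊕ A) : 0 ≤ N.resCap x e := by
  cases e with
  | inl a => exact sub_nonneg.mpr (hx.1 a).2
  | inr a => exact (hx.1 a).1

theorem resCap_cycleAugment [DecidableEq A] (x : A → ℤ) (B : List (A ⊕ A)) (m : ℤ)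
    (e : A ⊕ A) :
    N.resCap (cycleAugment x B m) e =
      N.resCap x e - ((B.count e : ℤ) - (B.count e.swap : ℤ)) * m := by
  cases e <;> simp only [resCap, cycleAugment, Sum.elim_inl, Sum.elim_inr, Sum.swap_inl,
    Sum.swap_inr] <;> ring

theorem resReach_of_swap_mem_cycle {N : Network V A} {y : A → ℤ} {p : V} {l : List (A ⊕ A)}
    (hl : ArcChain N.resTail N.resHead p p l) (hpos : ∀ f ∈ l, 0 < N.resCap y f)
    {e : A ⊕ A} (he : e.swap ∈ l) : N.ResReach y (N.resTail e) (N.resHead e) := by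
  have h := hl.reflTransGen_of_mem_of_closed hpos he
  rw [resTail_swap, resHead_swap] at h
  exact h

variable {N} [DecidableEq A] {x : A → ℤ} {B : List (A ⊕ A)} {m : ℤ}

theorem mem_of_resCap_cycleAugment_lt {e : A ⊕ A} (hm : 0 < m)
    (h : N.resCap (cycleAugment x B m) e < N.resCap x e) : e ∈ B := by
  rw [resCap_cycleAugment] at h
  have : B.count e.swap < B.count e := by
    by_contra! hle
    have hle' : (B.count e : ℤ) ≤ B.count e.swap := by exact_mod_cast hle
    nlinarith
  exact List.count_pos_iff.mp (by omega)

theorem swap_mem_of_resCap_lt_resCap_cycleAugment {e : A ⊕ A} (hm : 0 < m)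
    (h : N.resCap x e < N.resCap (cycleAugment x B m) e) : e.swap ∈ B := by
  rw [resCap_cycleAugment] at h
  have : B.count e < B.count e.swap := by
    by_contra! hle
    have hle' : (B.count e.swap : ℤ) ≤ B.count e := by exact_mod_cast hle
    nlinarith
  exact List.count_pos_iff.mp (by omega)

theorem resCap_cycleAugment_swap_pos (hnonneg : ∀ e, 0 ≤ N.resCap x e) (hB : B.Nodup)
    (hub : ∀ e ∈ B, m ≤ N.resCap x e) (hm : 0 < m) {f : A ⊕ A} (hf : f ∈ B) :
    0 < N.resCap (cycleAugment x B m) f.swap := by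
  rw [resCap_cycleAugment, Sum.swap_swap, List.count_eq_one_of_mem hB hf]
  by_cases hswap : f.swap ∈ B
  · rw [List.count_eq_one_of_mem hB hswap]
    push_cast
    linarith [hub _ hswap]
  · rw [List.count_eq_zero_of_not_mem hswap]
    push_cast
    linarith [hnonneg f.swap]

theorem resReach_cycleAugment_iff [Fintype A] [DecidableEq V] (hx : N.Feasible x) {p : V}
    (hB : N.IsResCycle x p B) (hub : ∀ e ∈ B, m ≤ N.resCap x e) (hm : 0 < m) {v w : V} :
    N.ResReach (cycleAugment x B m) v w ↔ N.ResReach x v w := by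
  obtain ⟨⟨hchain, hpos⟩, -, hnodup⟩ := hB
  have hchain' : ArcChain N.resTail N.resHead p p (B.map Sum.swap).reverse :=
    hchain.reverse_map Sum.swap N.resTail_swap N.resHead_swap
  have hpos' : ∀ f ∈ (B.map Sum.swap).reverse, 0 < N.resCap (cycleAugment x B m) f := by
    simp only [List.mem_reverse, List.mem_map, forall_exists_index, and_imp]
    rintro _ f hf rfl
    exact resCap_cycleAugment_swap_pos hx.resCap_nonneg hnodup.of_map hub hm hf
  constructor
  · refine fun h => Relation.reflTransGen_closed ?_ _ _ h
    rintro _ _ ⟨e, he, rfl, rfl⟩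
    by_cases hxe : 0 < N.resCap x e
    · exact .single ⟨e, hxe, rfl, rfl⟩
    · exact resReach_of_swap_mem_cycle hchain hpos
        (swap_mem_of_resCap_lt_resCap_cycleAugment hm ((not_lt.mp hxe).trans_lt he))
  · refine fun h => Relation.reflTransGen_closed ?_ _ _ h
    rintro _ _ ⟨e, he, rfl, rfl⟩
    by_cases hxe : 0 < N.resCap (cycleAugment x B m) e
    · exact .single ⟨e, hxe, rfl, rfl⟩
    · exact resReach_of_swap_mem_cycle hchain' hpos'
        (List.mem_reverse.mpr (List.mem_map_of_mem
          (mem_of_resCap_cycleAugment_lt hm ((not_lt.mp hxe).trans_lt he))))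

end Network

/-- Augmenting a maximum flow along a residual cycle `B` by its residual capacity
`m = u_x(B)` leaves the residual reachability classes `V_x(s)`, `V_x(t)` and the set of
between-cut nodes unchanged. -/
theorem reachability_invariant_under_cycle_augmentation {V A : Type*}
    [Fintype A] [DecidableEq V] [DecidableEq A] (N : Network V A)
    (x : A → ℤ) (hx : N.IsMaxFlow x)
    (p : V) (B : List (A ⊕ A)) (hB : N.IsResCycle x p B)
    (m : ℤ) (hub : ∀ e ∈ B, m ≤ N.resCap x e) (hmem : ∃ e ∈ B, N.resCap x e = m) :
    let x' : A → ℤ := fun a =>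
      x a + ((B.count (Sum.inl a) : ℤ) - (B.count (Sum.inr a) : ℤ)) * m
    ∀ v : V,
      (N.ResReach x N.s v ↔ N.ResReach x' N.s v) ∧
      (N.ResReach x v N.t ↔ N.ResReach x' v N.t) ∧
      ((¬ N.ResReach x N.s v ∧ ¬ N.ResReach x v N.t) ↔
        (¬ N.ResReach x' N.s v ∧ ¬ N.ResReach x' v N.t)) := by
  intro x' v
  have hm : 0 < m := by
    obtain ⟨e, he, rfl⟩ := hmem
    exact hB.1.2 e he
  have hreach : ∀ v w, N.ResReach x' v w ↔ N.ResReach x v w := fun _ _ =>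
    Network.resReach_cycleAugment_iff hx.1 hB hub hm
  simp only [hreach, and_self]
end

section
/- Let x be a maximum s-t flow in a network N. Then every directed cycle C in the residual network N_x lies entirely within exactly one of the three vertex classes: V_x(s) (nodes reachable from s), V_x(t) (nodes that can reach t), or the complement V \ (V_x(s) ∪ V_x(t)). -/
namespace Network
variable {V A : Type*} (N : Network V A) {x : A → ℤ}

theorem isResWalk_cons {p q : V} {e : A ⊕ A} {l : List (A ⊕ A)} :
    N.IsResWalk x p q (e :: l) ↔
      N.resTail e = p ∧ 0 < N.resCap x e ∧ N.IsResWalk x (N.resHead e) q l := by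
  simp only [IsResWalk, ArcChain, List.forall_mem_cons]
  tauto

theorem resReach_of_isResWalk_of_mem {p q v : V} {l : List (A ⊕ A)}
    (hl : N.IsResWalk x p q l) (hv : v ∈ p :: l.map N.resHead) :
    N.ResReach x p v ∧ N.ResReach x v q := by
  induction l generalizing p v with
  | nil =>
    obtain rfl : p = q := hl.1
    obtain rfl : v = p := by simpa using hv
    exact ⟨.refl, .refl⟩
  | cons e l ih =>
    obtain ⟨rfl, hcap, hrest⟩ := N.isResWalk_cons.mp hl
    have hstep : N.ResReach x (N.resTail e) (N.resHead e) := .single ⟨e, hcap, rfl, rfl⟩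
    rcases List.mem_cons.mp hv with rfl | hv
    · exact ⟨.refl, hstep.trans (ih hrest List.mem_cons_self).2⟩
    · obtain ⟨hfrom, hto⟩ := ih hrest hv
      exact ⟨hstep.trans hfrom, hto⟩

end Network

theorem residual_cycle_in_one_class_general {V A : Type*} (N : Network V A) (x : A → ℤ)
    (p : V) (C : List (A ⊕ A)) (hC : N.IsResCycle x p C) :
    (∀ v ∈ p :: C.map N.resHead, N.ResReach x N.s v) ∨
    (∀ v ∈ p :: C.map N.resHead, N.ResReach x v N.t) ∨
    (∀ v ∈ p :: C.map N.resHead, ¬ N.ResReach x N.s v ∧ ¬ N.ResReach x v N.t) := by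
  -- every vertex of the cycle is strongly connected to `p`, so it lies in the class of `p`
  have hcycle := fun v (hv : v ∈ p :: C.map N.resHead) =>
    N.resReach_of_isResWalk_of_mem hC.1 hv
  by_cases hs : N.ResReach x N.s p
  · exact .inl fun v hv => hs.trans (hcycle v hv).1
  by_cases ht : N.ResReach x p N.t
  · exact .inr <| .inl fun v hv => (hcycle v hv).2.trans ht
  exact .inr <| .inr fun v hv =>
    ⟨fun h => hs (h.trans (hcycle v hv).2), fun h => ht ((hcycle v hv).1.trans h)⟩

/-- For a maximum `s`-`t` flow, every cycle in the residual network lies entirely within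
one of the three vertex classes: `V_x(s)`, `V_x(t)`, or the between-cut complement. -/
theorem residual_cycle_in_one_class {V A : Type*}
    [Fintype A] [DecidableEq V] (N : Network V A)
    (x : A → ℤ) (hfeas : N.Feasible x) (hmax : ¬ N.ResReach x N.s N.t)
    (p : V) (C : List (A ⊕ A)) (hC : N.IsResCycle x p C) :
    (∀ v ∈ p :: C.map N.resHead, N.ResReach x N.s v) ∨
    (∀ v ∈ p :: C.map N.resHead, N.ResReach x v N.t) ∨
    (∀ v ∈ p :: C.map N.resHead, ¬ N.ResReach x N.s v ∧ ¬ N.ResReach x v N.t) :=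
  residual_cycle_in_one_class_general N x p C hC
end

section
/- Let x be a static maximum s-t flow in a network N whose residual network (with unit-capacity arc copies) N_x^{u=1} contains no cycle of negative transit time. Let B be a cycle in N_x^{u=1} with transit time τ(B) = 0 and let x' = x + χ^B. Then the residual network N_{x'} also contains no cycle of negative transit time. -/
/-!
For a cycle `l` of `N_{x'}`, the vector `g = χ^B + χ^l` is a circulation whose residual
support lies in `N_x`: an arc of `l` missing from `N_x` is the reverse of an arc of `B`, and
the two cancel in `g`. Peeling off simple cycles of `N_x` one at a time shows that
`τ(g) ≥ 0`, while `τ(g) = τ(B) + τ(l) = τ(l)`.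
-/

open Finset

/-- Core derives `BEq` for `Sum` without a `LawfulBEq` instance, which the `List.count`
lemmas need for lists of residual arcs. -/
instance inst_s7 {α β : Type*} [BEq α] [LawfulBEq α] [BEq β] [LawfulBEq β] : LawfulBEq (α ⊕ β) where
  eq_of_beq {a b} h := by
    cases a <;> cases b <;> first | cases h | exact congrArg _ (eq_of_beq h)
  rfl {a} := by
    cases a with
    | inl a => exact (beq_self_eq_true a :)
    | inr b => exact (beq_self_eq_true b :)

section ArcChain

variable {W E : Type*} {tl hd : E → W}

theorem arcChain_append (l m : List E) (p r : W) :
    ArcChain tl hd p r (l ++ m) ↔ ∃ q, ArcChain tl hd p q l ∧ ArcChain tl hd q r m := by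
  induction l generalizing p with
  | nil => simp [ArcChain]
  | cons e l ih => simp [ArcChain, ih, and_assoc]

theorem ArcChain.sum_map_sub {G : Type*} [AddCommGroup G] (φ : W → G) :
    ∀ {l : List E} {p q : W}, ArcChain tl hd p q l →
      (l.map fun e => φ (hd e) - φ (tl e)).sum = φ q - φ p
  | [], _, _, h => by simp [show _ = _ from h]
  | e :: l, _, _, ⟨rfl, h⟩ => by simp [h.sum_map_sub φ]

theorem ArcChain.exists_simple_closed_of_not_nodup :
    ∀ {l : List E} {p q : W}, ArcChain tl hd p q l → ¬ (l.map hd).Nodup →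
      ∃ r m, ArcChain tl hd r r m ∧ m ≠ [] ∧ (m.map hd).Nodup ∧ m ⊆ l
  | [], _, _, _, hnd => absurd List.nodup_nil hnd
  | e :: l, _, _, ⟨_, h⟩, hnd => by
    by_cases hl : (l.map hd).Nodup
    · -- the first arc closes a cycle with a prefix of `l`, whose heads are distinct
      obtain ⟨e', he', hhd⟩ : ∃ e' ∈ l, hd e' = hd e := by
        simpa [List.nodup_cons, hl] using hnd
      obtain ⟨s, t, rfl⟩ := List.append_of_mem he'
      obtain ⟨r, hs, hr, -⟩ := (arcChain_append s (e' :: t) _ _).mp h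
      refine ⟨hd e, s ++ [e'], (arcChain_append _ _ _ _).mpr ⟨r, hs, hr, hhd⟩, by simp, ?_, ?_⟩
      · exact hl.sublist ((List.sublist_append_left (s ++ [e']) t).map hd |>.trans (by simp))
      · intro x hx
        simp only [List.mem_append, List.mem_cons] at hx ⊢
        tauto
    · obtain ⟨r, m, hm, hne, hnd', hsub⟩ := h.exists_simple_closed_of_not_nodup hl
      exact ⟨r, m, hm, hne, hnd', fun x hx => List.mem_cons_of_mem e (hsub hx)⟩

theorem exists_long_arcChain (S : E → Prop) (hS : ∀ e, S e → ∃ e', S e' ∧ tl e' = hd e) :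
    ∀ (n : ℕ) (e : E), S e → ∃ q l, l.length = n ∧ ArcChain tl hd (hd e) q l ∧ ∀ e ∈ l, S e
  | 0, e, _ => ⟨hd e, [], rfl, rfl, by simp⟩
  | n + 1, e, he => by
    obtain ⟨e', he', htl⟩ := hS e he
    obtain ⟨q, l, hlen, hl, hlS⟩ := exists_long_arcChain S hS n e' he'
    exact ⟨q, e' :: l, by simp [hlen], ⟨htl, hl⟩, by simpa [he'] using hlS⟩

theorem exists_simple_closed_of_forall_exists_succ [Fintype E] (S : E → Prop)
    (hS : ∀ e, S e → ∃ e', S e' ∧ tl e' = hd e) {e₀ : E} (he₀ : S e₀) :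
    ∃ r m, ArcChain tl hd r r m ∧ m ≠ [] ∧ (m.map hd).Nodup ∧ ∀ e ∈ m, S e := by
  obtain ⟨q, l, hlen, hl, hlS⟩ := exists_long_arcChain S hS (Fintype.card E + 1) e₀ he₀
  have hnd : ¬ (l.map hd).Nodup := fun hnd => by
    have := (hnd.of_map hd).length_le_card
    omega
  obtain ⟨r, m, hm, hne, hnd', hsub⟩ := hl.exists_simple_closed_of_not_nodup hnd
  exact ⟨r, m, hm, hne, hnd', fun e he => hlS e (hsub he)⟩

end ArcChain

section Residual

variable {A : Type*}

theorem resC_add (f g : A → ℤ) : resC (f + g) = resC f + resC g := by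
  ext (a | a) <;> simp [resC, add_comm]

theorem resC_sub (f g : A → ℤ) : resC (f - g) = resC f - resC g := by
  ext (a | a) <;> simp [resC, neg_add_eq_sub]

theorem resC_swap (f : A → ℤ) (e : A ⊕ A) : resC f e.swap = -resC f e := by
  cases e <;> simp [resC]

theorem resTT_eq_resC (τ : A → ℕ) : resTT τ = resC fun a => (τ a : ℤ) := by
  ext (a | a) <;> rfl

variable [DecidableEq A]

/-- The incidence vector `χ^l`; augmenting `x` along `l` gives `x + netCount l`. -/
def netCount (l : List (A ⊕ A)) (a : A) : ℤ :=
  (l.count (Sum.inl a) : ℤ) - l.count (Sum.inr a)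

theorem resC_netCount (l : List (A ⊕ A)) (e : A ⊕ A) :
    resC (netCount l) e = l.count e - l.count e.swap := by
  cases e <;> simp [resC, netCount]

theorem sum_map_resC [Fintype A] (w : A → ℤ) (l : List (A ⊕ A)) :
    (l.map (resC w)).sum = ∑ a, netCount l a * w a := by
  induction l with
  | nil => simp [netCount]
  | cons e l ih =>
    rw [List.map_cons, List.sum_cons, ih]
    rcases e with b | b <;>
      simp [netCount, List.count_cons, resC, add_mul, sub_mul, sum_add_distrib,
        sum_sub_distrib] <;> ring

theorem resC_sub_netCount {g : A → ℤ} {m : List (A ⊕ A)} (hm : m.Nodup)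
    (hmg : ∀ e ∈ m, 0 < resC g e) (e : A ⊕ A) :
    (0 < resC (g - netCount m) e → 0 < resC g e) ∧
      (resC (g - netCount m) e).toNat + (if e ∈ m then 1 else 0) ≤ (resC g e).toNat := by
  have hcount := List.nodup_iff_count_le_one.mp hm
  have hin : 0 < m.count e → 0 < resC g e := fun h => hmg e (List.count_pos_iff.mp h)
  have hswap : 0 < m.count e.swap → resC g e < 0 := fun h => by
    simpa [resC_swap] using hmg _ (List.count_pos_iff.mp h)
  have := hcount e
  have := hcount e.swap
  rw [resC_sub, Pi.sub_apply, resC_netCount]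
  split_ifs with he
  · have := List.count_pos_iff.mpr he
    omega
  · have := List.count_eq_zero_of_not_mem he
    omega

end Residual

namespace Network

variable {V A : Type*} {N : Network V A}

theorem resCap_add (x f : A → ℤ) (e : A ⊕ A) : N.resCap (x + f) e = N.resCap x e - resC f e := by
  cases e <;> simp [resCap, resC, sub_sub]

theorem resCap_pos_of_resC_netCount_add_pos [DecidableEq A] {x : A → ℤ} {B l : List (A ⊕ A)}
    (hB : ∀ e ∈ B, 0 < N.resCap x e) (hl : ∀ e ∈ l, 0 < N.resCap (x + netCount B) e)
    (hnd : l.Nodup) (e : A ⊕ A) (he : 0 < resC (netCount B + netCount l) e) :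
    0 < N.resCap x e := by
  by_cases heB : e ∈ B
  · exact hB e heB
  have hcount := List.nodup_iff_count_le_one.mp hnd e
  rw [resC_add, Pi.add_apply, resC_netCount, resC_netCount,
    List.count_eq_zero_of_not_mem heB] at he
  have hel : e ∈ l := List.count_pos_iff.mp (by omega)
  have := hl e hel
  rw [resCap_add, resC_netCount, List.count_eq_zero_of_not_mem heB] at this
  omega

variable (N) in
/-- Conservation at every node, in the form `⟨g, ∂φ⟩ = 0` for every potential `φ`; the
indicator of a node `v` as `φ` recovers conservation at `v`. -/
def IsCirculation [Fintype A] (g : A → ℤ) : Prop :=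
  ∀ φ : V → ℤ, ∑ a, g a * (φ (N.head a) - φ (N.tail a)) = 0

variable [Fintype A]

theorem IsCirculation.add {f g : A → ℤ} (hf : N.IsCirculation f) (hg : N.IsCirculation g) :
    N.IsCirculation (f + g) := fun φ => by
  simp [add_mul, sum_add_distrib, hf φ, hg φ]

theorem IsCirculation.sub {f g : A → ℤ} (hf : N.IsCirculation f) (hg : N.IsCirculation g) :
    N.IsCirculation (f - g) := fun φ => by
  simp [sub_mul, sum_sub_distrib, hf φ, hg φ]

theorem isCirculation_netCount [DecidableEq A] {p : V} {l : List (A ⊕ A)}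
    (hl : ArcChain N.resTail N.resHead p p l) : N.IsCirculation (netCount l) := fun φ => by
  have hres : resC (fun a => φ (N.head a) - φ (N.tail a)) =
      fun e => φ (N.resHead e) - φ (N.resTail e) := by
    ext (a | a) <;> simp [resC, resHead, resTail]
  rw [← sum_map_resC, hres, hl.sum_map_sub, sub_self]

theorem IsCirculation.exists_resC_pos_resTail_eq {g : A → ℤ} (hg : N.IsCirculation g)
    {e : A ⊕ A} (he : 0 < resC g e) : ∃ e', 0 < resC g e' ∧ N.resTail e' = N.resHead e := by
  classical
  by_contra! hout
  set v := N.resHead e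
  -- otherwise every arc contributes `≥ 0` to the net inflow at `v`, and the arc `e` `> 0`
  refine (hg fun w => if w = v then 1 else 0).not_gt (sum_pos' (fun a _ => ?_) ?_)
  · have h₁ := hout (.inl a)
    have h₂ := hout (.inr a)
    simp only [resC, resTail, Sum.elim_inl, Sum.elim_inr] at h₁ h₂
    split_ifs <;> grind
  · rcases e with b | b
    all_goals
      refine ⟨b, mem_univ _, ?_⟩
      have h₁ := hout (.inl b)
      have h₂ := hout (.inr b)
      simp only [resC, resTail, resHead, v, Sum.elim_inl, Sum.elim_inr] at he h₁ h₂ ⊢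
      split_ifs <;> grind

theorem sum_mul_nonneg_of_isCirculation [DecidableEq A] (c x : A → ℤ)
    (hcyc : ∀ q l, N.IsResCycle x q l → 0 ≤ (l.map (resC c)).sum) {g : A → ℤ}
    (hg : N.IsCirculation g) (hgx : ∀ e, 0 < resC g e → 0 < N.resCap x e) :
    0 ≤ ∑ a, g a * c a := by
  induction hn : ∑ e, (resC g e).toNat using Nat.strong_induction_on generalizing g with
  | _ n ih =>
  by_cases hsupp : ∃ e, 0 < resC g e
  swap
  · have hg0 : ∀ a, g a = 0 := fun a => by
      have h₁ := not_lt.mp (not_exists.mp hsupp (.inl a))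
      have h₂ := not_lt.mp (not_exists.mp hsupp (.inr a))
      simp only [resC, Sum.elim_inl, Sum.elim_inr] at h₁ h₂
      omega
    simp [hg0]
  obtain ⟨e₀, he₀⟩ := hsupp
  obtain ⟨r, m, hm, hne, hnd, hmg⟩ := exists_simple_closed_of_forall_exists_succ
    (fun e => 0 < resC g e) (fun e he => hg.exists_resC_pos_resTail_eq he) he₀
  have hmx : N.IsResCycle x r m := ⟨⟨hm, fun e he => hgx e (hmg e he)⟩, hne, hnd⟩
  have hstep := resC_sub_netCount (hnd.of_map _) hmg
  have hlt : ∑ e, (resC (g - netCount m) e).toNat < n := by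
    obtain ⟨e, he⟩ := List.exists_mem_of_ne_nil m hne
    refine hn ▸ sum_lt_sum (fun e _ => ?_) ⟨e, mem_univ _, ?_⟩
    · have := (hstep e).2
      omega
    · have := (hstep e).2
      simp only [he, if_true] at this
      omega
  have hrest := ih _ hlt (hg.sub (isCirculation_netCount hm))
    (fun e he => hgx e ((hstep e).1 he)) rfl
  calc 0 ≤ ∑ a, (g - netCount m) a * c a + (m.map (resC c)).sum := add_nonneg hrest (hcyc r m hmx)
    _ = ∑ a, g a * c a := by simp [sum_map_resC, sub_mul]

end Network

theorem no_negative_transit_cycle_after_zero_augmentation_general {V A : Type*}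
    [Fintype A] [DecidableEq A] (N : Network V A) (τ : A → ℕ)
    (x : A → ℤ)
    (hno : ∀ (q : V) (l : List (A ⊕ A)), N.IsResCycle x q l → 0 ≤ (l.map (resTT τ)).sum)
    (p : V) (B : List (A ⊕ A)) (hB : N.IsResCycle x p B)
    (hτB : (B.map (resTT τ)).sum = 0) :
    let x' : A → ℤ := fun a =>
      x a + ((B.count (Sum.inl a) : ℤ) - (B.count (Sum.inr a) : ℤ))
    ∀ (q : V) (l : List (A ⊕ A)), N.IsResCycle x' q l → 0 ≤ (l.map (resTT τ)).sum := by
  intro x' q l hl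
  rw [resTT_eq_resC] at hno hτB ⊢
  have hcirc := (Network.isCirculation_netCount hB.1.1).add
    (Network.isCirculation_netCount hl.1.1)
  have hsupp := Network.resCap_pos_of_resC_netCount_add_pos hB.1.2 hl.1.2 (hl.2.2.of_map _)
  have hcost := Network.sum_mul_nonneg_of_isCirculation _ x hno hcirc hsupp
  rw [sum_map_resC] at hτB ⊢
  simpa [add_mul, sum_add_distrib, hτB] using hcost

/-- If the residual network of a maximum flow `x` has no cycle of negative transit time,
then after augmenting along a residual cycle `B` of zero transit time (by one unit,
`x' = x + χ^B`), the new residual network still has no cycle of negative transit time. -/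
theorem no_negative_transit_cycle_after_zero_augmentation {V A : Type*}
    [Fintype A] [DecidableEq V] [DecidableEq A] (N : Network V A) (τ : A → ℕ)
    (x : A → ℤ) (hx : N.IsMaxFlow x)
    (hno : ∀ (q : V) (l : List (A ⊕ A)), N.IsResCycle x q l → 0 ≤ (l.map (resTT τ)).sum)
    (p : V) (B : List (A ⊕ A)) (hB : N.IsResCycle x p B)
    (hτB : (B.map (resTT τ)).sum = 0) :
    let x' : A → ℤ := fun a =>
      x a + ((B.count (Sum.inl a) : ℤ) - (B.count (Sum.inr a) : ℤ))
    ∀ (q : V) (l : List (A ⊕ A)), N.IsResCycle x' q l → 0 ≤ (l.map (resTT τ)).sum :=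
  no_negative_transit_cycle_after_zero_augmentation_general N τ x hno p B hB hτB
end

section
/- Let f be a flow over time in the time-expanded network N^{[1,θ]} that is repeated during [θ₁, θ₂]. For any walk W in the residual network N_{φ(f)} of the projected static flow and any layer θ' with θ₁ ≤ θ' ≤ θ₂ − h_{φ(f)}(W), the lifting lift(W, θ') is a walk in the residual time-expanded network N^{[θ₁,θ₂]}_f, and its projection π(lift(W, θ')) equals W. -/
/-- A flow over time network: directed multigraph, source, sink, integral capacities and
transit times. -/
structure FOTN (V A : Type*) where
  tail : A → V
  head : A → V
  s : V
  t : V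
  u : A → ℤ
  τ : A → ℕ

/-- Base arc of a residual arc. -/
def arcBase {A : Type*} : A ⊕ A → A := Sum.elim id id

/-- Lift a list of residual arcs starting at (integer) time `t`; each arc `e` is assigned
the layer of the copy it traverses, i.e. the smaller of its two endpoint times. -/
def liftFrom {E : Type*} (g : E → ℤ) : ℤ → List E → List (E × ℕ)
  | _, [] => []
  | t, e :: l => (e, (t + min 0 (g e)).toNat) :: liftFrom g (t + g e) l

/-- The lifting of a walk to layer `θ'`: start at time `max θ' (θ' - h⁻)`. -/
def liftW {E : Type*} (g : E → ℤ) (l : List E) (θ' : ℕ) : List (E × ℕ) :=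
  liftFrom g ((θ' : ℤ) - min 0 (hlo g l)) l

namespace FOTN
variable {V A : Type*} (N : FOTN V A)

/-- Tail of a residual arc in the base network. -/
def bTail : A ⊕ A → V := Sum.elim N.tail N.head

def bHead : A ⊕ A → V := Sum.elim N.head N.tail

/-- Residual capacity in the base network with respect to a static flow `x`. -/
def bCap (x : A → ℤ) : A ⊕ A → ℤ := Sum.elim (fun a => N.u a - x a) x

/-- A walk in the residual network `N_x` of the base network. -/
def IsResWalk (x : A → ℤ) (p q : V) (l : List (A ⊕ A)) : Prop :=
  ArcChain N.bTail N.bHead p q l ∧ ∀ e ∈ l, 0 < N.bCap x e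

/-- A cycle in the residual network `N_x` of the base network. -/
def IsResCycle (x : A → ℤ) (p : V) (l : List (A ⊕ A)) : Prop :=
  N.IsResWalk x p p l ∧ l ≠ [] ∧ (l.map N.bHead).Nodup

/-- Tail of a residual time-expanded arc `(e, ℓ)`: the copy `a^ℓ` of `a` goes from layer
`ℓ` to layer `ℓ + τ(a)`; backward arcs are reversed. -/
def teTail : (A ⊕ A) × ℕ → V × ℕ
  | (Sum.inl a, ℓ) => (N.tail a, ℓ)
  | (Sum.inr a, ℓ) => (N.head a, ℓ + N.τ a)

def teHead : (A ⊕ A) × ℕ → V × ℕ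
  | (Sum.inl a, ℓ) => (N.head a, ℓ + N.τ a)
  | (Sum.inr a, ℓ) => (N.tail a, ℓ)

/-- Residual capacity of a time-expanded residual arc with respect to a flow over time. -/
def teCap (f : A → ℕ → ℤ) : (A ⊕ A) × ℕ → ℤ
  | (Sum.inl a, ℓ) => N.u a - f a ℓ
  | (Sum.inr a, ℓ) => f a ℓ

/-- The arc lies between layers `θ₁` and `θ₂` of the time-expanded network. -/
def InLayers (θ₁ θ₂ : ℕ) (e : (A ⊕ A) × ℕ) : Prop :=
  θ₁ ≤ e.2 ∧ e.2 + N.τ (arcBase e.1) ≤ θ₂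

/-- Membership in the residual time-expanded network `N^{[θ₁,θ₂]}_f`. -/
def InResTEN (f : A → ℕ → ℤ) (θ₁ θ₂ : ℕ) (e : (A ⊕ A) × ℕ) : Prop :=
  0 < N.teCap f e ∧ N.InLayers θ₁ θ₂ e

/-- A walk in the residual time-expanded network `N^{[θ₁,θ₂]}_f`. -/
def IsTENWalk (f : A → ℕ → ℤ) (θ₁ θ₂ : ℕ) (p q : V × ℕ) (l : List ((A ⊕ A) × ℕ)) : Prop :=
  ArcChain N.teTail N.teHead p q l ∧ ∀ e ∈ l, N.InResTEN f θ₁ θ₂ e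

/-- A cycle in the residual time-expanded network `N^{[θ₁,θ₂]}_f`. -/
def IsTENCycle (f : A → ℕ → ℤ) (θ₁ θ₂ : ℕ) (p : V × ℕ) (l : List ((A ⊕ A) × ℕ)) : Prop :=
  N.IsTENWalk f θ₁ θ₂ p p l ∧ l ≠ [] ∧ (l.map N.teHead).Nodup

/-- A flow over time with time horizon `θ`, as a static flow in the time-expanded
network: capacities, support on the existing copies `a^ℓ`, `ℓ ∈ {1,…,θ-1}`, and flow
conservation at every node other than the super-terminals (i.e. at all `v ≠ s, t`). -/
def IsFlowOverTime [Fintype A] [DecidableEq V] (f : A → ℕ → ℤ) (θ : ℕ) : Prop :=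
  (∀ a ℓ, 0 ≤ f a ℓ ∧ f a ℓ ≤ N.u a) ∧
  (∀ a ℓ, ¬(1 ≤ ℓ ∧ ℓ + 1 ≤ θ) → f a ℓ = 0) ∧
  (∀ v, v ≠ N.s → v ≠ N.t → ∀ ℓ : ℕ,
    (∑ a : A, if N.head a = v then f a (ℓ - N.τ a) else 0) =
    (∑ a : A, if N.tail a = v then f a ℓ else 0))

/-- `f` is repeated during `[θ₁, θ₂]`. -/
def Repeated (_Nw : FOTN V A) (f : A → ℕ → ℤ) (θ₁ θ₂ : ℕ) : Prop :=
  ∀ a : A, ∀ ℓ : ℕ, θ₁ ≤ ℓ → ℓ < θ₂ → f a ℓ = f a (ℓ + 1)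

/-- The projection `φ(f)(a) := f(a^{θ₁})`. -/
def proj (_Nw : FOTN V A) (f : A → ℕ → ℤ) (θ₁ : ℕ) : A → ℤ := fun a => f a θ₁

end FOTN

section Heights
variable {E : Type*} (g : E → ℤ)

lemma zero_mem_psums (l : List E) : (0 : ℤ) ∈ psums g l := by
  cases l <;> simp [psums]

lemma forall_mem_psums_cons {P : ℤ → Prop} {e : E} {l : List E} :
    (∀ z ∈ psums g (e :: l), P z) ↔ P 0 ∧ ∀ z ∈ psums g l, P (g e + z) := by
  simp [psums]

lemma hlo_le_of_mem_psums {l : List E} {z : ℤ} (hz : z ∈ psums g l) : hlo g l ≤ z :=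
  List.min_le_of_le' 0 hz le_rfl

lemma le_hhi_of_mem_psums {l : List E} {z : ℤ} (hz : z ∈ psums g l) : z ≤ hhi g l :=
  List.le_max_of_le' 0 hz le_rfl

lemma hlo_nonpos (l : List E) : hlo g l ≤ 0 :=
  hlo_le_of_mem_psums g (zero_mem_psums g l)

lemma map_fst_liftFrom (t : ℤ) (l : List E) : (liftFrom g t l).map Prod.fst = l := by
  induction l generalizing t <;> simp [liftFrom, *]

end Heights

namespace FOTN
variable {V A : Type*} {N : FOTN V A} {f : A → ℕ → ℤ} {θ₁ θ₂ : ℕ}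

lemma Repeated.apply_eq_of_mem_Icc (hrep : N.Repeated f θ₁ θ₂) (a : A)
    {ℓ : ℕ} (hℓ : ℓ ∈ Set.Icc θ₁ θ₂) : f a ℓ = f a θ₁ := by
  obtain ⟨hθ₁, hθ₂⟩ := hℓ
  induction ℓ, hθ₁ using Nat.le_induction with
  | base => rfl
  | succ n hn ih => rw [← hrep a n hn hθ₂, ih (by omega)]

lemma teTail_lift {e : A ⊕ A} {t : ℤ} (h₁ : 0 ≤ t + resTT N.τ e) :
    N.teTail (e, (t + min 0 (resTT N.τ e)).toNat) = (N.bTail e, t.toNat) := by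
  cases e <;> simp only [teTail, bTail, resTT, Sum.elim_inl, Sum.elim_inr] at h₁ ⊢ <;> grind

lemma teHead_lift {e : A ⊕ A} {t : ℤ} (h₀ : 0 ≤ t) :
    N.teHead (e, (t + min 0 (resTT N.τ e)).toNat) = (N.bHead e, (t + resTT N.τ e).toNat) := by
  cases e <;> simp only [teHead, bHead, resTT, Sum.elim_inl, Sum.elim_inr] <;> grind

lemma Repeated.teCap_eq_bCap (hrep : N.Repeated f θ₁ θ₂)
    (e : A ⊕ A) {ℓ : ℕ} (hℓ : ℓ ∈ Set.Icc θ₁ θ₂) : N.teCap f (e, ℓ) = N.bCap (N.proj f θ₁) e := by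
  cases e <;> simp [teCap, bCap, proj, hrep.apply_eq_of_mem_Icc _ hℓ]

lemma inResTEN_lift (hrep : N.Repeated f θ₁ θ₂) {e : A ⊕ A}
    (hcap : 0 < N.bCap (N.proj f θ₁) e) {t : ℤ} (h₀ : t ∈ Set.Icc (θ₁ : ℤ) θ₂)
    (h₁ : t + resTT N.τ e ∈ Set.Icc (θ₁ : ℤ) θ₂) :
    N.InResTEN f θ₁ θ₂ (e, (t + min 0 (resTT N.τ e)).toNat) := by
  have hlayers : N.InLayers θ₁ θ₂ (e, (t + min 0 (resTT N.τ e)).toNat) := by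
    obtain ⟨h₀l, h₀r⟩ := h₀
    obtain ⟨h₁l, h₁r⟩ := h₁
    cases e <;>
      simp only [InLayers, arcBase, resTT, Sum.elim_inl, Sum.elim_inr, id] at h₁l h₁r ⊢ <;> omega
  refine ⟨?_, hlayers⟩
  rwa [hrep.teCap_eq_bCap _ ⟨hlayers.1, le_trans (Nat.le_add_right _ _) hlayers.2⟩]

lemma arcChain_liftFrom {p q : V} {l : List (A ⊕ A)} (hl : ArcChain N.bTail N.bHead p q l)
    {t : ℤ} (ht : ∀ z ∈ psums (resTT N.τ) l, 0 ≤ t + z) :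
    ArcChain N.teTail N.teHead (p, t.toNat) (q, (t + (l.map (resTT N.τ)).sum).toNat)
      (liftFrom (resTT N.τ) t l) := by
  induction l generalizing p t with
  | nil => simpa [liftFrom, ArcChain] using hl
  | cons e l ih =>
    obtain ⟨htail, hl⟩ := hl
    obtain ⟨h₀, ht⟩ := (forall_mem_psums_cons _).mp ht
    have h₁ : 0 ≤ t + resTT N.τ e := by simpa using ht 0 (zero_mem_psums _ _)
    refine ⟨by rw [teTail_lift h₁, htail], ?_⟩
    rw [teHead_lift (by simpa using h₀), List.map_cons, List.sum_cons, ← add_assoc]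
    exact ih hl fun z hz => by simpa [add_assoc] using ht z hz

lemma inResTEN_of_mem_liftFrom (hrep : N.Repeated f θ₁ θ₂)
    {l : List (A ⊕ A)} (hcap : ∀ e ∈ l, 0 < N.bCap (N.proj f θ₁) e) {t : ℤ}
    (ht : ∀ z ∈ psums (resTT N.τ) l, t + z ∈ Set.Icc (θ₁ : ℤ) θ₂) :
    ∀ x ∈ liftFrom (resTT N.τ) t l, N.InResTEN f θ₁ θ₂ x := by
  induction l generalizing t with
  | nil => simp [liftFrom]
  | cons e l ih =>
    rw [List.forall_mem_cons] at hcap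
    obtain ⟨h₀, ht⟩ := (forall_mem_psums_cons _).mp ht
    have h₁ : t + resTT N.τ e ∈ Set.Icc (θ₁ : ℤ) θ₂ := by simpa using ht 0 (zero_mem_psums _ _)
    rw [liftFrom, List.forall_mem_cons]
    exact ⟨inResTEN_lift hrep hcap.1 (by simpa using h₀) h₁,
      ih hcap.2 fun z hz => by simpa [add_assoc] using ht z hz⟩

lemma IsResWalk.isTENWalk_liftFrom (hrep : N.Repeated f θ₁ θ₂)
    {p q : V} {l : List (A ⊕ A)} (hl : N.IsResWalk (N.proj f θ₁) p q l) {t : ℤ}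
    (ht : ∀ z ∈ psums (resTT N.τ) l, t + z ∈ Set.Icc (θ₁ : ℤ) θ₂) :
    N.IsTENWalk f θ₁ θ₂ (p, t.toNat) (q, (t + (l.map (resTT N.τ)).sum).toNat)
      (liftFrom (resTT N.τ) t l) :=
  ⟨arcChain_liftFrom hl.1 fun z hz => (Int.natCast_nonneg θ₁).trans (ht z hz).1,
    inResTEN_of_mem_liftFrom hrep hl.2 ht⟩

end FOTN

theorem lifting_is_walk_and_projects_back_general {V A : Type*}
    (N : FOTN V A)
    (f : A → ℕ → ℤ) (θ₁ θ₂ : ℕ)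
    (hrep : N.Repeated f θ₁ θ₂)
    (p q : V) (W : List (A ⊕ A)) (hW : N.IsResWalk (N.proj f θ₁) p q W)
    (θ' : ℕ) (hθ'lo : θ₁ ≤ θ') (hθ'hi : (θ' : ℤ) + spreadOf (resTT N.τ) W ≤ θ₂) :
    N.IsTENWalk f θ₁ θ₂
      (p, ((θ' : ℤ) - min 0 (hlo (resTT N.τ) W)).toNat)
      (q, ((θ' : ℤ) - min 0 (hlo (resTT N.τ) W) + (W.map (resTT N.τ)).sum).toNat)
      (liftW (resTT N.τ) W θ') ∧
    (liftW (resTT N.τ) W θ').map Prod.fst = W := by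
  refine ⟨hW.isTENWalk_liftFrom hrep fun z hz => ?_, map_fst_liftFrom _ _ _⟩
  have hlo_le := hlo_le_of_mem_psums _ hz
  have le_hhi := le_hhi_of_mem_psums _ hz
  rw [min_eq_right (hlo_nonpos _ _)]
  unfold spreadOf at hθ'hi
  constructor <;> omega

/-- For a flow over time `f` repeated during `[θ₁, θ₂]` and a walk `W` in the residual
network of the projected static flow `φ(f)`, for every layer `θ'` with
`θ₁ ≤ θ'` and `θ' + h(W) ≤ θ₂`, the lifting `lift(W, θ')` is a walk in the residual
time-expanded network `N^{[θ₁,θ₂]}_f`, and its projection equals `W`. -/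
theorem lifting_is_walk_and_projects_back {V A : Type*}
    [Fintype A] [DecidableEq V] (N : FOTN V A) (hτ : ∀ a, N.τ a ≤ 1)
    (f : A → ℕ → ℤ) (θ θ₁ θ₂ : ℕ)
    (hf : N.IsFlowOverTime f θ) (hrep : N.Repeated f θ₁ θ₂)
    (h1 : 1 ≤ θ₁) (h2 : θ₁ + 2 ≤ θ₂) (h3 : θ₂ + 1 ≤ θ)
    (p q : V) (W : List (A ⊕ A)) (hW : N.IsResWalk (N.proj f θ₁) p q W)
    (θ' : ℕ) (hθ'lo : θ₁ ≤ θ') (hθ'hi : (θ' : ℤ) + spreadOf (resTT N.τ) W ≤ θ₂) :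
    N.IsTENWalk f θ₁ θ₂
      (p, ((θ' : ℤ) - min 0 (hlo (resTT N.τ) W)).toNat)
      (q, ((θ' : ℤ) - min 0 (hlo (resTT N.τ) W) + (W.map (resTT N.τ)).sum).toNat)
      (liftW (resTT N.τ) W θ') ∧
    (liftW (resTT N.τ) W θ').map Prod.fst = W :=
  lifting_is_walk_and_projects_back_general N f θ₁ θ₂ hrep p q W hW θ' hθ'lo hθ'hi
end

section
/- Let x and x' be flows in a network N with x' = x + χ^B for a cycle B in N_x, and let B' be any cycle in N_{x'}. Then the multigraph obtained from the disjoint union of the arcs of B and B' by cancelling opposite arc pairs is Eulerian, every arc of it is a residual arc of N_x, and consequently there exist cycles B₁, ..., B_ℓ in N_x with Σ_j τ(B_j) = τ(B) + τ(B') and Σ_j c(B_j) = c(B) + c(B'). -/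
/-- The opposite of a residual arc. -/
def oppArc {A : Type*} : A ⊕ A → A ⊕ A := Sum.elim (fun a => Sum.inr a) (fun a => Sum.inl a)

/-!
Augmenting along `B` changes `x` only on the arcs of `B`, so an arc of `B'` that is not residual
in `N_x` is the reverse of an arc of `B`. Cancelling these opposite pairs leaves a multiset of
residual arcs of `N_x`; it is Eulerian because `B`, `B'` and each cancelled pair are. An Eulerian
multiset splits into cycles: it contains a closed walk (follow unused arcs until returning), a
closed walk contains a cycle (cut at a repeated vertex), and removing a cycle keeps it Eulerian.
Transit times and costs are odd under arc reversal, so cancelled pairs contribute nothing.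
-/

section ArcChain

variable {W E : Type*} {tl hd : E → W}

theorem arcChain_append_iff {p r : W} {l₁ l₂ : List E} :
    ArcChain tl hd p r (l₁ ++ l₂) ↔ ∃ q, ArcChain tl hd p q l₁ ∧ ArcChain tl hd q r l₂ := by
  induction l₁ generalizing p with
  | nil => exact ⟨fun h => ⟨p, rfl, h⟩, fun ⟨_, rfl, h⟩ => h⟩
  | cons e l ih =>
    simp only [List.cons_append, ArcChain, ih]
    exact ⟨fun ⟨h₁, q, h₂, h₃⟩ => ⟨q, ⟨h₁, h₂⟩, h₃⟩, fun ⟨q, ⟨h₁, h₂⟩, h₃⟩ => ⟨h₁, q, h₂, h₃⟩⟩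

theorem ArcChain.countP_head_add [DecidableEq W] {p q : W} {l : List E}
    (h : ArcChain tl hd p q l) (v : W) :
    (l : Multiset E).countP (hd · = v) + (if p = v then 1 else 0) =
      (l : Multiset E).countP (tl · = v) + (if q = v then 1 else 0) := by
  induction l generalizing p with
  | nil => cases h; simp
  | cons e l ih =>
    obtain ⟨rfl, h⟩ := h
    have := ih h
    rw [← Multiset.cons_coe, Multiset.countP_cons, Multiset.countP_cons]
    split_ifs at this ⊢ <;> omega

def IsEulerian [DecidableEq W] (tl hd : E → W) (M : Multiset E) : Prop :=
  ∀ v, M.countP (hd · = v) = M.countP (tl · = v)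

def IsArcCycle (tl hd : E → W) (p : W) (l : List E) : Prop :=
  ArcChain tl hd p p l ∧ l ≠ [] ∧ (l.map hd).Nodup

section Eulerian

variable [DecidableEq W] {M M' : Multiset E}

theorem ArcChain.isEulerian {p : W} {l : List E} (h : ArcChain tl hd p p l) :
    IsEulerian tl hd (l : Multiset E) := fun v => by
  have := h.countP_head_add v
  omega

theorem IsEulerian.add (hM : IsEulerian tl hd M) (hM' : IsEulerian tl hd M') :
    IsEulerian tl hd (M + M') := fun v => by
  simp only [Multiset.countP_add, hM v, hM' v]

theorem IsEulerian.of_add_left (h : IsEulerian tl hd (M + M')) (hM : IsEulerian tl hd M) :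
    IsEulerian tl hd M' := fun v => by
  have := h v
  simp only [Multiset.countP_add, hM v] at this
  omega

theorem isEulerian_add_map {r : E → E} (hd_r : ∀ e, hd (r e) = tl e) (tl_r : ∀ e, tl (r e) = hd e)
    (K : Multiset E) : IsEulerian tl hd (K + K.map r) := fun v => by
  simp only [Multiset.countP_add, Multiset.countP_map, hd_r, tl_r,
    ← Multiset.countP_eq_card_filter]
  omega

end Eulerian

theorem ArcChain.exists_shorter_closed_sublist {p q : W} {l : List E}
    (h : ArcChain tl hd p q l) (hnd : ¬(l.map hd).Nodup) :
    ∃ v C, C ≠ [] ∧ ArcChain tl hd v v C ∧ C.length < l.length ∧ C.Sublist l := by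
  obtain ⟨v, hv⟩ := not_forall_not.1 (mt List.nodup_iff_sublist.2 hnd)
  obtain ⟨l', hl', hvv⟩ := List.sublist_map_iff.1 hv
  rcases l' with _ | ⟨e₁, _ | ⟨e₂, _ | _⟩⟩ <;> simp only [List.map_cons, List.map_nil,
    List.cons.injEq, reduceCtorEq, and_false, and_true] at hvv
  obtain ⟨r₁, r₂, rfl, he₁, he₂⟩ := List.cons_sublist_iff.1 hl'
  obtain ⟨a, b, rfl⟩ := List.append_of_mem he₁
  obtain ⟨c, d, rfl⟩ := List.append_of_mem (List.singleton_sublist.1 he₂)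
  simp only [List.append_assoc, List.cons_append, arcChain_append_iff, ArcChain] at h
  obtain ⟨-, -, -, m, hb, m', hc, he₂tl, -⟩ := h
  refine ⟨v, b ++ (c ++ [e₂]), by simp, ?_, by simp; omega, ?_⟩
  · rw [← hvv.1] at hb
    exact arcChain_append_iff.2 ⟨m, hb, arcChain_append_iff.2 ⟨m', hc, he₂tl, hvv.2.symm⟩⟩
  · simp only [List.append_assoc, List.cons_append]
    exact ((List.sublist_append_left _ _).append_left c |>.append_left b).cons e₁ |>.trans
      (List.sublist_append_right a _)

theorem ArcChain.exists_isArcCycle_sublist {p : W} {l : List E} (h : ArcChain tl hd p p l)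
    (hne : l ≠ []) : ∃ q C, IsArcCycle tl hd q C ∧ C.Sublist l := by
  by_cases hnd : (l.map hd).Nodup
  · exact ⟨p, l, ⟨h, hne, hnd⟩, .refl l⟩
  obtain ⟨v, C, hCne, hC, hlen, hCl⟩ := h.exists_shorter_closed_sublist hnd
  obtain ⟨q, D, hD, hDC⟩ := hC.exists_isArcCycle_sublist hCne
  exact ⟨q, D, hD, hDC.trans hCl⟩
termination_by l.length

section Decomposition

variable [DecidableEq W] [DecidableEq E]

/-- The degree condition says that `M` plus one arc from `t` to `s` is Eulerian; the walk is
built greedily. -/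
theorem exists_arcChain_le {M : Multiset E} {s t : W}
    (hM : ∀ v, M.countP (tl · = v) + (if t = v then 1 else 0) =
      M.countP (hd · = v) + (if s = v then 1 else 0)) :
    ∃ l, ArcChain tl hd s t l ∧ (l : Multiset E) ≤ M := by
  by_cases hst : s = t
  · exact ⟨[], hst, Multiset.zero_le M⟩
  have hout : 0 < M.countP (tl · = s) := by
    have := hM s
    rw [if_neg (Ne.symm hst), if_pos rfl] at this
    omega
  obtain ⟨e, heM, rfl⟩ := Multiset.countP_pos.1 hout
  have hMe : M = e ::ₘ M.erase e := (Multiset.cons_erase heM).symm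
  have hM' : ∀ v, (M.erase e).countP (tl · = v) + (if t = v then 1 else 0) =
      (M.erase e).countP (hd · = v) + (if hd e = v then 1 else 0) := fun v => by
    have := hM v
    rw [hMe, Multiset.countP_cons, Multiset.countP_cons] at this
    split_ifs at this ⊢ <;> omega
  have : (M.erase e).card < M.card := Multiset.card_erase_lt_of_mem heM
  obtain ⟨l, hl, hlM⟩ := exists_arcChain_le hM'
  refine ⟨e :: l, ⟨rfl, hl⟩, ?_⟩
  rw [← Multiset.cons_coe, hMe]
  exact Multiset.cons_le_cons e hlM
termination_by M.card

theorem IsEulerian.exists_closed_arcChain_le {M : Multiset E} (hM : IsEulerian tl hd M)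
    (hne : M ≠ 0) : ∃ p l, l ≠ [] ∧ ArcChain tl hd p p l ∧ (l : Multiset E) ≤ M := by
  obtain ⟨e, he⟩ := Multiset.exists_mem_of_ne_zero hne
  have hMe : M = e ::ₘ M.erase e := (Multiset.cons_erase he).symm
  have hM' : ∀ v, (M.erase e).countP (tl · = v) + (if tl e = v then 1 else 0) =
      (M.erase e).countP (hd · = v) + (if hd e = v then 1 else 0) := fun v => by
    have := hM v
    rw [hMe, Multiset.countP_cons, Multiset.countP_cons] at this
    omega
  obtain ⟨l, hl, hlM⟩ := exists_arcChain_le hM'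
  refine ⟨tl e, e :: l, List.cons_ne_nil e l, ⟨rfl, hl⟩, ?_⟩
  rw [← Multiset.cons_coe, hMe]
  exact Multiset.cons_le_cons e hlM

theorem IsEulerian.exists_isArcCycle_sum_eq {M : Multiset E} (hM : IsEulerian tl hd M) :
    ∃ cs : List (W × List E), (∀ pr ∈ cs, IsArcCycle tl hd pr.1 pr.2) ∧
      (cs.map fun pr => (pr.2 : Multiset E)).sum = M := by
  rcases eq_or_ne M 0 with rfl | hne
  · exact ⟨[], by simp, rfl⟩
  obtain ⟨p, l, hlne, hl, hlM⟩ := hM.exists_closed_arcChain_le hne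
  obtain ⟨q, C, hC, hCl⟩ := hl.exists_isArcCycle_sublist hlne
  have hCM : (C : Multiset E) ≤ M := (Multiset.coe_le.2 hCl.subperm).trans hlM
  have hrest : IsEulerian tl hd (M - C) :=
    IsEulerian.of_add_left (by rwa [add_tsub_cancel_of_le hCM]) hC.1.isEulerian
  have : (M - C).card < M.card := by
    have hC0 : 0 < (C : Multiset E).card := List.length_pos_iff.2 hC.2.1
    have := Multiset.card_le_card hCM
    rw [Multiset.card_sub hCM]
    omega
  obtain ⟨cs, hcs, hsum⟩ := hrest.exists_isArcCycle_sum_eq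
  refine ⟨(q, C) :: cs, ?_, ?_⟩
  · simpa only [List.forall_mem_cons] using ⟨hC, hcs⟩
  · rw [List.map_cons, List.sum_cons, hsum, add_tsub_cancel_of_le hCM]
termination_by M.card

end Decomposition

end ArcChain

instance Sum.instLawfulBEq {α β : Type*} [BEq α] [LawfulBEq α] [BEq β] [LawfulBEq β] :
    LawfulBEq (α ⊕ β) where
  rfl {a} := by
    cases a with
    | inl a => exact beq_self_eq_true a
    | inr b => exact beq_self_eq_true b
  eq_of_beq {a b} h := by
    cases a <;> cases b <;> first | cases h | exact congrArg _ (eq_of_beq h)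

/-- Cancel every element `e` of `T` failing `P` against a copy of `r e` in `S`. -/
theorem Multiset.exists_add_eq_add_add_map {E : Type*} [DecidableEq E] {r : E → E}
    (hr : Function.Injective r) (P : E → Prop) [DecidablePred P] {S T : Multiset E} (hT : T.Nodup)
    (h : ∀ e ∈ T, ¬P e → r e ∈ S) :
    ∃ H K : Multiset E, S + T = H + K + K.map r ∧ ∀ e ∈ H, e ∈ S ∨ P e := by
  set K := T.filter (¬P ·)
  have hK : K.map r ≤ S := by
    refine (Multiset.le_iff_subset ((hT.filter _).map hr)).2 fun e he => ?_
    obtain ⟨a, ha, rfl⟩ := Multiset.mem_map.1 he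
    exact h a (Multiset.mem_of_mem_filter ha) (Multiset.mem_filter.1 ha).2
  refine ⟨S - K.map r + T.filter P, K, ?_, fun e he => ?_⟩
  · calc S + T = (S - K.map r + K.map r) + (T.filter P + K) := by
          rw [tsub_add_cancel_of_le hK, Multiset.filter_add_not]
      _ = S - K.map r + T.filter P + K + K.map r := by ac_rfl
  · rcases Multiset.mem_add.1 he with h | h
    · exact .inl (Multiset.mem_of_le (Multiset.sub_le_self _ _) h)
    · exact .inr (Multiset.mem_filter.1 h).2

theorem Multiset.sum_map_eq_of_add_eq_add_add_map {E G : Type*} [AddCommGroup G] {g : E → G}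
    {r : E → E} (hg : ∀ e, g (r e) = -g e) {S T H K : Multiset E}
    (h : S + T = H + K + K.map r) : (H.map g).sum = (S.map g).sum + (T.map g).sum := by
  have := congrArg (fun M => (M.map g).sum) h
  simp only [Multiset.map_add, Multiset.sum_add, Multiset.map_map, Function.comp_def, hg,
    Multiset.sum_map_neg] at this
  rw [this, add_neg_cancel_right]

theorem List.sum_map_sum_map_coe {ι E G : Type*} [AddCommMonoid G] (g : E → G)
    (f : ι → List E) (cs : List ι) :
    (cs.map fun i => ((f i).map g).sum).sum =
      ((cs.map fun i => (f i : Multiset E)).sum.map g).sum := by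
  induction cs with
  | nil => simp
  | cons i cs ih => simp [ih]

theorem oppArc_involutive {A : Type*} : Function.Involutive (oppArc (A := A)) := by
  rintro (a | a) <;> rfl

@[simp]
theorem resTT_oppArc {A : Type*} (τ : A → ℕ) (e : A ⊕ A) : resTT τ (oppArc e) = -resTT τ e := by
  cases e <;> simp [resTT, oppArc]

@[simp]
theorem resC_oppArc {A : Type*} (c : A → ℤ) (e : A ⊕ A) : resC c (oppArc e) = -resC c e := by
  cases e <;> simp [resC, oppArc]

namespace Network

variable {V A : Type*} (N : Network V A)

@[simp]
theorem resHead_oppArc (e : A ⊕ A) : N.resHead (oppArc e) = N.resTail e := by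
  cases e <;> rfl

@[simp]
theorem resTail_oppArc (e : A ⊕ A) : N.resTail (oppArc e) = N.resHead e := by
  cases e <;> rfl

/-- Augmenting along `B` changes the flow only on arcs of `B`. -/
theorem resCap_pos_or_oppArc_mem [DecidableEq A] {x : A → ℤ} {B : List (A ⊕ A)} {e : A ⊕ A}
    (he : 0 < N.resCap
      (fun a => x a + ((B.count (Sum.inl a) : ℤ) - (B.count (Sum.inr a) : ℤ))) e) :
    0 < N.resCap x e ∨ oppArc e ∈ B := by
  by_contra! h
  rcases e with a | a <;>
    simp only [resCap, Sum.elim_inl, Sum.elim_inr, oppArc] at he h <;>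
    have := List.count_eq_zero.2 h.2 <;> omega

end Network

theorem union_of_cycles_decomposes_in_old_residual_general {V A : Type*}
    [DecidableEq V] [DecidableEq A] (N : Network V A)
    (τ : A → ℕ) (c : A → ℤ) (x : A → ℤ)
    (p : V) (B : List (A ⊕ A)) (hB : N.IsResCycle x p B)
    (p' : V) (B' : List (A ⊕ A))
    (hB' : N.IsResCycle
      (fun a => x a + ((B.count (Sum.inl a) : ℤ) - (B.count (Sum.inr a) : ℤ))) p' B') :
    ∃ Hm K : Multiset (A ⊕ A),
      (B : Multiset (A ⊕ A)) + (B' : Multiset (A ⊕ A)) = Hm + K + K.map oppArc ∧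
      (∀ v : V, (Hm.filter (fun e => N.resHead e = v)).card
              = (Hm.filter (fun e => N.resTail e = v)).card) ∧
      (∀ e ∈ Hm, 0 < N.resCap x e) ∧
      ∃ cs : List (V × List (A ⊕ A)),
        (∀ pr ∈ cs, N.IsResCycle x pr.1 pr.2) ∧
        (cs.map (fun pr => ((pr.2 : Multiset (A ⊕ A))))).sum = Hm ∧
        (cs.map (fun pr => ((pr.2).map (resTT τ)).sum)).sum
          = (B.map (resTT τ)).sum + (B'.map (resTT τ)).sum ∧
        (cs.map (fun pr => ((pr.2).map (resC c)).sum)).sum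
          = (B.map (resC c)).sum + (B'.map (resC c)).sum := by
  obtain ⟨⟨hBchain, hBres⟩, -⟩ := hB
  obtain ⟨⟨hB'chain, hB'res⟩, -, hB'nd⟩ := hB'
  obtain ⟨Hm, K, hsplit, hHm⟩ := Multiset.exists_add_eq_add_add_map oppArc_involutive.injective
    (fun e => 0 < N.resCap x e) (Multiset.coe_nodup.2 hB'nd.of_map)
    fun e he hres => Multiset.mem_coe.2 <|
      (N.resCap_pos_or_oppArc_mem (hB'res e he)).resolve_left hres
  have hres : ∀ e ∈ Hm, 0 < N.resCap x e := fun e he => (hHm e he).elim (hBres e) id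
  have hEulerian : IsEulerian N.resTail N.resHead Hm := by
    refine .of_add_left ?_ (isEulerian_add_map N.resHead_oppArc N.resTail_oppArc K)
    rw [add_comm, ← add_assoc, ← hsplit]
    exact hBchain.isEulerian.add hB'chain.isEulerian
  obtain ⟨cs, hcs, hsum⟩ := hEulerian.exists_isArcCycle_sum_eq
  have hsum_map {g : A ⊕ A → ℤ} (hg : ∀ e, g (oppArc e) = -g e) :
      (cs.map fun pr => (pr.2.map g).sum).sum = (B.map g).sum + (B'.map g).sum := by
    rw [List.sum_map_sum_map_coe, hsum, Multiset.sum_map_eq_of_add_eq_add_add_map hg hsplit,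
      Multiset.map_coe, Multiset.map_coe, Multiset.sum_coe, Multiset.sum_coe]
  refine ⟨Hm, K, hsplit, fun v => ?_, hres, cs, fun pr hpr => ?_, hsum,
    hsum_map (resTT_oppArc τ), hsum_map (resC_oppArc c)⟩
  · simpa only [Multiset.countP_eq_card_filter] using hEulerian v
  · obtain ⟨hchain, hne, hnd⟩ := hcs pr hpr
    have hle : (pr.2 : Multiset (A ⊕ A)) ≤ Hm :=
      hsum ▸ List.le_sum_of_mem (List.mem_map_of_mem hpr)
    exact ⟨⟨hchain, fun e he => hres e (Multiset.mem_of_le hle he)⟩, hne, hnd⟩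

/-- Let `x' = x + χ^B` for a cycle `B` of the residual network `N_x`, and let `B'` be any
cycle of `N_{x'}`. Then the multigraph obtained from the disjoint union of the arcs of `B`
and `B'` by cancelling opposite arc pairs is Eulerian, consists of residual arcs of `N_x`,
and decomposes into cycles `B₁,…,B_ℓ` of `N_x` with `Σ τ(B_j) = τ(B) + τ(B')` and
`Σ c(B_j) = c(B) + c(B')`. -/
theorem union_of_cycles_decomposes_in_old_residual {V A : Type*}
    [Fintype A] [DecidableEq V] [DecidableEq A] (N : Network V A)
    (τ : A → ℕ) (c : A → ℤ) (x : A → ℤ)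
    (p : V) (B : List (A ⊕ A)) (hB : N.IsResCycle x p B)
    (p' : V) (B' : List (A ⊕ A))
    (hB' : N.IsResCycle
      (fun a => x a + ((B.count (Sum.inl a) : ℤ) - (B.count (Sum.inr a) : ℤ))) p' B') :
    ∃ Hm K : Multiset (A ⊕ A),
      (B : Multiset (A ⊕ A)) + (B' : Multiset (A ⊕ A)) = Hm + K + K.map oppArc ∧
      (∀ v : V, (Hm.filter (fun e => N.resHead e = v)).card
              = (Hm.filter (fun e => N.resTail e = v)).card) ∧
      (∀ e ∈ Hm, 0 < N.resCap x e) ∧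
      ∃ cs : List (V × List (A ⊕ A)),
        (∀ pr ∈ cs, N.IsResCycle x pr.1 pr.2) ∧
        (cs.map (fun pr => ((pr.2 : Multiset (A ⊕ A))))).sum = Hm ∧
        (cs.map (fun pr => ((pr.2).map (resTT τ)).sum)).sum
          = (B.map (resTT τ)).sum + (B'.map (resTT τ)).sum ∧
        (cs.map (fun pr => ((pr.2).map (resC c)).sum)).sum
          = (B.map (resC c)).sum + (B'.map (resC c)).sum :=
  union_of_cycles_decomposes_in_old_residual_general N τ c x p B hB p' B' hB'
end
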